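/- The number of unipotent elements in SL₂(𝔽_p) (i.e., matrices g with (g - I)² = 0) equals p². -/
import Mathlib
open Matrix

section Stmt9Aux
variable (p : ℕ) [Fact p.Prime]

private lemma stmt9_key (g : Matrix (Fin 2) (Fin 2) (ZMod p)) (h : (g-1)^2 = 0) :
    (g 0 0 - 1)*(g 0 0 - 1) + (g 0 1)*(g 1 0) = 0 ∧ g 1 1 = 1 - (g 0 0 - 1) := by
  have e := fun i j => Matrix.ext_iff.mpr h i j
  have e00 := e 0 0
  have e01 := e 0 1
  have e10 := e 1 0
  have e11 := e 1 1
  simp only [pow_two, Matrix.mul_apply, Fin.sum_univ_two, Matrix.sub_apply,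
    Matrix.one_apply, Matrix.zero_apply] at e00 e01 e10 e11
  norm_num at e00 e01 e10 e11
  constructor
  · linear_combination e00
  · by_cases hb : g 0 1 = 0
    · by_cases hc : g 1 0 = 0
      · have ha : g 0 0 - 1 = 0 := by
          have : (g 0 0 - 1)*(g 0 0 -1) = 0 := by linear_combination e00 - (g 1 0) * hb
          exact mul_self_eq_zero.mp this
        have hd : g 1 1 - 1 = 0 := by
          have : (g 1 1 - 1)*(g 1 1 -1) = 0 := by linear_combination e11 - (g 0 1) * hc
          exact mul_self_eq_zero.mp this
        linear_combination hd + ha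
      · have : (g 1 0) * ((g 0 0 - 1) + (g 1 1 - 1)) = 0 := by linear_combination e10
        rcases mul_eq_zero.mp this with h'|h'
        · exact absurd h' hc
        · linear_combination h'
    · have : (g 0 1) * ((g 0 0 - 1) + (g 1 1 - 1)) = 0 := by linear_combination e01
      rcases mul_eq_zero.mp this with h'|h'
      · exact absurd h' hb
      · linear_combination h'

private def stmt9T := {x : ZMod p × ZMod p × ZMod p // x.1 * x.1 + x.2.1 * x.2.2 = 0}

private def stmt9mat (x : ZMod p × ZMod p × ZMod p) : Matrix (Fin 2) (Fin 2) (ZMod p) :=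
  !![1 + x.1, x.2.1; x.2.2, 1 - x.1]

private def stmt9e1 :
    {g : Matrix.SpecialLinearGroup (Fin 2) (ZMod p) //
      ((g : Matrix (Fin 2) (Fin 2) (ZMod p)) - 1) ^ 2 = 0} ≃ stmt9T p where
  toFun s := ⟨(((s.1 : Matrix (Fin 2) (Fin 2) (ZMod p)) 0 0 - 1),
      (s.1 : Matrix (Fin 2) (Fin 2) (ZMod p)) 0 1,
      (s.1 : Matrix (Fin 2) (Fin 2) (ZMod p)) 1 0), (stmt9_key p _ s.2).1⟩
  invFun x := ⟨⟨stmt9mat p x.1, by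
      rcases x with ⟨⟨a,b,c⟩, hx⟩
      simp only [stmt9mat, Matrix.det_fin_two_of]
      linear_combination -hx⟩, by
      apply Matrix.ext_iff.mp
      intro i j
      rcases x with ⟨⟨a,b,c⟩, hx⟩
      change a * a + b * c = 0 at hx
      fin_cases i <;> fin_cases j <;>
        simp [stmt9mat, pow_two, Matrix.mul_apply, Fin.sum_univ_two, Matrix.sub_apply,
          Matrix.one_apply] <;> first | ring1 | linear_combination hx⟩
  left_inv s := by
    rcases s with ⟨⟨g, hg⟩, h⟩
    have hk := stmt9_key p g h
    apply Subtype.ext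
    apply Subtype.ext
    apply Matrix.ext_iff.mp
    intro i j
    fin_cases i <;> fin_cases j <;> simp [stmt9mat]
    · exact hk.2.symm
  right_inv x := by
    rcases x with ⟨⟨a,b,c⟩, hx⟩
    apply Subtype.ext
    simp [stmt9mat]

private def stmt9f (x : stmt9T p) : (ZMod p × (ZMod p)ˣ) ⊕ ZMod p :=
  if hc : x.1.2.2 = 0 then .inr x.1.2.1 else .inl (x.1.1, Units.mk0 x.1.2.2 hc)

private def stmt9g : (ZMod p × (ZMod p)ˣ) ⊕ ZMod p → stmt9T p
  | .inl z => ⟨(z.1, -(z.1*z.1) * ↑z.2⁻¹, ↑z.2), by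
      linear_combination (-(z.1*z.1)) * z.2.inv_mul⟩
  | .inr b => ⟨(0, b, 0), by ring⟩

private def stmt9e2 : stmt9T p ≃ (ZMod p × (ZMod p)ˣ) ⊕ ZMod p where
  toFun := stmt9f p
  invFun := stmt9g p
  left_inv x := by
    rcases x with ⟨⟨a,b,c⟩, hx⟩
    change a * a + b * c = 0 at hx
    simp only [stmt9f]
    split_ifs with hc
    · change c = 0 at hc
      subst hc
      have ha : a = 0 := mul_self_eq_zero.mp (by linear_combination hx)
      simp only [stmt9g]
      apply Subtype.ext
      change ((0 : ZMod p), b, (0 : ZMod p)) = (a, b, 0)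
      rw [ha]
    · change ¬ c = 0 at hc
      simp only [stmt9g]
      apply Subtype.ext
      have hb : -(a*a) * ((Units.mk0 c hc)⁻¹ : (ZMod p)ˣ).val = b := by
        rw [Units.val_inv_eq_inv_val, Units.val_mk0, neg_mul, neg_eq_iff_eq_neg,
          mul_inv_eq_iff_eq_mul₀ hc]
        linear_combination hx
      change (a, -(a*a) * ((Units.mk0 c hc)⁻¹ : (ZMod p)ˣ).val, c) = (a, b, c)
      rw [hb]
  right_inv y := by
    rcases y with ⟨a, u⟩ | b
    · dsimp only [stmt9g, stmt9f]
      rw [dif_neg u.ne_zero]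
      congr 2
      exact Units.ext rfl
    · dsimp only [stmt9g, stmt9f]
      rw [dif_pos rfl]

end Stmt9Aux

/-- The number of unipotent elements in SL₂(𝔽_p) equals p². -/
theorem stmt_9 (p : ℕ) [Fact p.Prime] :
    Nat.card {g : Matrix.SpecialLinearGroup (Fin 2) (ZMod p) //
      ((g : Matrix (Fin 2) (Fin 2) (ZMod p)) - 1) ^ 2 = 0} = p ^ 2 := by
  have hp : 0 < p := (Fact.out : p.Prime).pos
  rw [Nat.card_congr ((stmt9e1 p).trans (stmt9e2 p))]
  rw [Nat.card_sum, Nat.card_prod, Nat.card_zmod]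
  have hu : Nat.card (ZMod p)ˣ = p - 1 := by
    rw [Nat.card_eq_fintype_card, ZMod.card_units_eq_totient,
      Nat.totient_prime (Fact.out : p.Prime)]
  rw [hu]
  obtain ⟨q, rfl⟩ : ∃ q, p = q + 1 := ⟨p - 1, (Nat.succ_pred_eq_of_pos hp).symm⟩
  simp
  ring
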